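/- Let n ≥ 3, s ∈ (0,2), k^{2-s} = (n-2)(n-s)K(n,s) with K(n,s) > 0, and a > 0, X₀ ∈ ℝⁿ. Then the function û(X) = (a^{(2-s)/2} k^{(2-s)/2} / (a^{2-s} + |X - X₀|^{2-s}))^{(n-2)/(2-s)} is a classical solution on ℝⁿ \ {X₀} of Δû = K(n,s)^{-1} û^{2*(s)-1} / |X - X₀|^s, where 2*(s) = 2(n-s)/(n-2) and Δ = -div(∇) is the (geometer's) Laplacian. -/

import Mathlib

/-!
The bubble is radial: `û(X) = g(‖X - X₀‖²)` with `g(t) = C^β (A + t^γ)^(-β)`, where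
`A = a^(2-s)`, `C = (ak)^((2-s)/2)`, `γ = (2-s)/2`, `β = (n-2)/(2-s)`. Away from `X₀` the coordinate
second derivatives of such a function sum to `2n g'(t) + 4t g''(t)` at `t = ‖X - X₀‖²`, and because
`2γ = 2 - s` and `2βγ = n - 2` this collapses to `-(n-2)(n-s) A C^β (A + t^γ)^(-β-2) t^(-s/2)`.
Since `C² = A k^(2-s) = A (n-2)(n-s) K` and `û^(2*(s)-1) = C^(β+2) (A + t^γ)^(-β-2)`, this is the
equation.
-/

open Real Topology

section RadialLaplacian

variable {ι : Type*} [Fintype ι] [DecidableEq ι]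

theorem hasFDerivAt_comp_sq_norm_sub {E : Type*} [NormedAddCommGroup E] [InnerProductSpace ℝ E]
    {g : ℝ → ℝ} {d : ℝ} {x₀ x : E} (hg : HasDerivAt g d (‖x - x₀‖ ^ 2)) :
    HasFDerivAt (fun y => g (‖y - x₀‖ ^ 2)) (d • (2 : ℕ) • innerSL ℝ (x - x₀)) x := by
  have hq : HasFDerivAt (fun y : E => ‖y - x₀‖ ^ 2) ((2 : ℕ) • innerSL ℝ (x - x₀)) x := by
    simpa using ((hasFDerivAt_id x).sub_const x₀).norm_sq
  exact hg.comp_hasFDerivAt x hq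

theorem fderiv_comp_sq_norm_sub_single {g g' : ℝ → ℝ} {x₀ x : EuclideanSpace ℝ ι}
    (hg : HasDerivAt g (g' (‖x - x₀‖ ^ 2)) (‖x - x₀‖ ^ 2)) (i : ι) :
    fderiv ℝ (fun y => g (‖y - x₀‖ ^ 2)) x (EuclideanSpace.single i 1) =
      g' (‖x - x₀‖ ^ 2) * (2 * (x - x₀) i) := by
  rw [(hasFDerivAt_comp_sq_norm_sub hg).fderiv]
  simp [EuclideanSpace.inner_single_right]

theorem sum_fderiv_fderiv_comp_sq_norm_sub {g g' : ℝ → ℝ} {g'' : ℝ}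
    {x₀ x : EuclideanSpace ℝ ι}
    (hg : ∀ᶠ t in 𝓝 (‖x - x₀‖ ^ 2), HasDerivAt g (g' t) t)
    (hg' : HasDerivAt g' g'' (‖x - x₀‖ ^ 2)) :
    ∑ i, fderiv ℝ (fun y => fderiv ℝ (fun y => g (‖y - x₀‖ ^ 2)) y (EuclideanSpace.single i 1)) x
        (EuclideanSpace.single i 1) =
      2 * Fintype.card ι * g' (‖x - x₀‖ ^ 2) + 4 * ‖x - x₀‖ ^ 2 * g'' := by
  have hnear : ∀ᶠ y in 𝓝 x, HasDerivAt g (g' (‖y - x₀‖ ^ 2)) (‖y - x₀‖ ^ 2) :=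
    ((continuous_id.sub continuous_const).norm.pow 2).continuousAt.eventually hg
  have hpartial (i : ι) :
      fderiv ℝ (fun y => fderiv ℝ (fun y => g (‖y - x₀‖ ^ 2)) y (EuclideanSpace.single i 1)) x
          (EuclideanSpace.single i 1) =
        2 * g' (‖x - x₀‖ ^ 2) + 4 * g'' * (x - x₀) i ^ 2 := by
    have hcoord : HasFDerivAt (fun y : EuclideanSpace ℝ ι => 2 * (y - x₀) i)
        ((2 : ℝ) • EuclideanSpace.proj (𝕜 := ℝ) i) x := by
      simpa using
        ((EuclideanSpace.proj (𝕜 := ℝ) i).hasFDerivAt (x := x) |>.sub_const (x₀ i)).const_mul 2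
    rw [Filter.EventuallyEq.fderiv_eq
        (hnear.mono fun y hy => fderiv_comp_sq_norm_sub_single hy i),
      ((hasFDerivAt_comp_sq_norm_sub hg').fun_mul hcoord).fderiv]
    simp only [PiLp.sub_apply, map_sub, add_apply, smul_apply, sub_apply, PiLp.proj_apply,
      PiLp.single_eq_same, innerSL_apply_apply, EuclideanSpace.inner_single_right, conj_trivial,
      smul_eq_mul, nsmul_eq_mul, Nat.cast_ofNat]
    ring
  rw [Finset.sum_congr rfl fun i _ => hpartial i, Finset.sum_add_distrib, Finset.sum_const,
    ← Finset.mul_sum, ← EuclideanSpace.real_norm_sq_eq, Finset.card_univ, nsmul_eq_mul]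
  ring

end RadialLaplacian

theorem sq_rpow_div_two {r : ℝ} (hr : 0 ≤ r) (p : ℝ) : (r ^ 2) ^ (p / 2) = r ^ p := by
  rw [rpow_div_two_eq_sqrt p (sq_nonneg r), sqrt_sq hr]

section BubbleProfile

variable (A C γ β : ℝ)

noncomputable def bubbleProfile (t : ℝ) : ℝ :=
  C ^ β * (A + t ^ γ) ^ (-β)

noncomputable def bubbleProfileDeriv (t : ℝ) : ℝ :=
  -β * γ * C ^ β * ((A + t ^ γ) ^ (-β - 1) * t ^ (γ - 1))

noncomputable def bubbleProfileDeriv2 (t : ℝ) : ℝ :=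
  -β * γ * C ^ β * ((-β - 1) * (A + t ^ γ) ^ (-β - 2) * (γ * t ^ (γ - 1)) * t ^ (γ - 1) +
    (A + t ^ γ) ^ (-β - 1) * ((γ - 1) * t ^ (γ - 2)))

variable {A C γ β} {t : ℝ}

theorem hasDerivAt_add_rpow (ht : 0 < t) :
    HasDerivAt (fun t : ℝ => A + t ^ γ) (γ * t ^ (γ - 1)) t :=
  (hasDerivAt_rpow_const (Or.inl ht.ne')).const_add A

theorem add_rpow_pos (hA : 0 < A) (ht : 0 ≤ t) : 0 < A + t ^ γ :=
  add_pos_of_pos_of_nonneg hA (rpow_nonneg ht γ)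

theorem hasDerivAt_bubbleProfile (hA : 0 < A) (ht : 0 < t) :
    HasDerivAt (bubbleProfile A C γ β) (bubbleProfileDeriv A C γ β t) t := by
  refine (((hasDerivAt_add_rpow ht).rpow_const
    (Or.inl (add_rpow_pos hA ht.le).ne')).const_mul (C ^ β)).congr_deriv ?_
  unfold bubbleProfileDeriv
  ring

theorem hasDerivAt_bubbleProfileDeriv (hA : 0 < A) (ht : 0 < t) :
    HasDerivAt (bubbleProfileDeriv A C γ β) (bubbleProfileDeriv2 A C γ β t) t := by
  have hpow : HasDerivAt (fun t : ℝ => (A + t ^ γ) ^ (-β - 1))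
      ((-β - 1) * (A + t ^ γ) ^ (-β - 2) * (γ * t ^ (γ - 1))) t := by
    refine ((hasDerivAt_add_rpow ht).rpow_const (p := -β - 1)
      (Or.inl (add_rpow_pos hA ht.le).ne')).congr_deriv ?_
    ring_nf
  have hmon : HasDerivAt (fun t : ℝ => t ^ (γ - 1)) ((γ - 1) * t ^ (γ - 2)) t := by
    refine (hasDerivAt_rpow_const (p := γ - 1) (Or.inl ht.ne')).congr_deriv ?_
    ring_nf
  exact (hpow.mul hmon).const_mul _

theorem contDiffAt_bubbleProfile {m : WithTop ℕ∞} (hA : 0 < A) (ht : 0 < t) :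
    ContDiffAt ℝ m (bubbleProfile A C γ β) t :=
  contDiffAt_const.mul <|
    (contDiffAt_const.add (contDiffAt_rpow_const_of_ne ht.ne')).rpow_const_of_ne
      (add_rpow_pos hA ht.le).ne'

theorem bubbleProfile_rpow (hβ : β ≠ 0) (hA : 0 < A) (hC : 0 < C) (ht : 0 ≤ t) :
    bubbleProfile A C γ β t ^ ((β + 2) / β) = C ^ β * C ^ 2 * (A + t ^ γ) ^ (-β - 2) := by
  have hH := add_rpow_pos (γ := γ) hA ht
  rw [bubbleProfile, mul_rpow (rpow_nonneg hC.le _) (rpow_nonneg hH.le _), ← rpow_mul hC.le,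
    ← rpow_mul hH.le, mul_div_cancel₀ _ hβ, neg_mul, mul_div_cancel₀ _ hβ, rpow_add hC,
    rpow_two, neg_add']

theorem radial_bubbleProfileDeriv {m s : ℝ} (hγ : 2 * γ = 2 - s) (hβ : β * (2 - s) = m - 2)
    (hA : 0 < A) (ht : 0 < t) :
    2 * m * bubbleProfileDeriv A C γ β t + 4 * t * bubbleProfileDeriv2 A C γ β t =
      -((m - 2) * (m - s) * A * C ^ β * (A + t ^ γ) ^ (-β - 2) * t ^ (γ - 1)) := by
  have hH := add_rpow_pos (γ := γ) hA ht.le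
  have hpow : (A + t ^ γ) ^ (-β - 1) = (A + t ^ γ) ^ (-β - 2) * (A + t ^ γ) := by
    rw [← rpow_add_one hH.ne']; ring_nf
  have hsub : t ^ (γ - 2) = t ^ (γ - 1) / t := by
    rw [← rpow_sub_one ht.ne']; ring_nf
  have hmul : t ^ γ = t ^ (γ - 1) * t := by
    rw [← rpow_add_one ht.ne']; ring_nf
  obtain rfl : s = 2 - 2 * γ := by linarith
  obtain rfl : m = 2 * β * γ + 2 := by linarith
  unfold bubbleProfileDeriv bubbleProfileDeriv2
  rw [hpow, hsub, hmul]
  field_simp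
  ring

theorem bubbleProfile_equation {m s K : ℝ} (hγ : 2 * γ = 2 - s) (hβ : β * (2 - s) = m - 2)
    (hm : m ≠ 2) (hK : K ≠ 0) (hA : 0 < A) (hC : 0 < C)
    (hC2 : C ^ 2 = A * ((m - 2) * (m - s) * K)) (ht : 0 < t) :
    -(2 * m * bubbleProfileDeriv A C γ β t + 4 * t * bubbleProfileDeriv2 A C γ β t) =
      K⁻¹ * bubbleProfile A C γ β t ^ (2 * (m - s) / (m - 2) - 1) / t ^ (s / 2) := by
  have hm2 : m - 2 ≠ 0 := sub_ne_zero.mpr hm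
  have hβ0 : β ≠ 0 := by rintro rfl; exact hm2 (by linarith)
  have hexp : 2 * (m - s) / (m - 2) - 1 = (β + 2) / β := by
    rw [div_sub_one hm2, div_eq_div_iff hm2 hβ0]
    linear_combination 2 * hβ
  have hmon : t ^ (γ - 1) = (t ^ (s / 2))⁻¹ := by
    rw [← rpow_neg ht.le]; congr 1; linarith
  rw [radial_bubbleProfileDeriv hγ hβ hA ht, hexp, bubbleProfile_rpow hβ0 hA hC ht.le, hC2, hmon]
  field_simp

theorem bubbleProfile_sq {s r : ℝ} (hA : 0 < A) (hC : 0 ≤ C) (hr : 0 ≤ r) :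
    bubbleProfile A C (s / 2) β (r ^ 2) = (C / (A + r ^ s)) ^ β := by
  rw [bubbleProfile, sq_rpow_div_two hr, div_rpow hC (add_rpow_pos hA hr).le,
    rpow_neg (add_rpow_pos hA hr).le, div_eq_mul_inv]

end BubbleProfile

theorem stmt_2_general (n : ℕ) (hn : 3 ≤ n) (s K a k : ℝ) (hs2 : s < 2)
    (hK : 0 < K) (ha : 0 < a) (hk : 0 < k)
    (hkdef : k ^ (2 - s) = ((n : ℝ) - 2) * ((n : ℝ) - s) * K)
    (X₀ : EuclideanSpace ℝ (Fin n)) :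
    let twoStar : ℝ := 2 * ((n : ℝ) - s) / ((n : ℝ) - 2)
    let uhat : EuclideanSpace ℝ (Fin n) → ℝ := fun X =>
      (a ^ ((2 - s) / 2) * k ^ ((2 - s) / 2) / (a ^ (2 - s) + ‖X - X₀‖ ^ (2 - s)))
        ^ (((n : ℝ) - 2) / (2 - s))
    ∀ X, X ≠ X₀ →
      ContDiffAt ℝ 2 uhat X ∧
      -(∑ i : Fin n, fderiv ℝ (fun y => fderiv ℝ uhat y (EuclideanSpace.single i 1)) X
          (EuclideanSpace.single i 1)) =
        K⁻¹ * uhat X ^ (twoStar - 1) / ‖X - X₀‖ ^ s := by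
  intro twoStar uhat X hX
  have hA : 0 < a ^ (2 - s) := rpow_pos_of_pos ha _
  have hC : 0 < a ^ ((2 - s) / 2) * k ^ ((2 - s) / 2) := by positivity
  have hu : uhat = fun y => bubbleProfile (a ^ (2 - s)) (a ^ ((2 - s) / 2) * k ^ ((2 - s) / 2))
      ((2 - s) / 2) (((n : ℝ) - 2) / (2 - s)) (‖y - X₀‖ ^ 2) :=
    funext fun y => (bubbleProfile_sq hA hC.le (norm_nonneg _)).symm
  have ht : 0 < ‖X - X₀‖ ^ 2 := by
    have := sub_ne_zero.mpr hX
    positivity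
  have hC2 : (a ^ ((2 - s) / 2) * k ^ ((2 - s) / 2)) ^ 2 =
      a ^ (2 - s) * (((n : ℝ) - 2) * ((n : ℝ) - s) * K) := by
    rw [mul_pow, ← rpow_mul_natCast ha.le, ← rpow_mul_natCast hk.le, ← hkdef]
    norm_num
  have hn3 : (3 : ℝ) ≤ n := by exact_mod_cast hn
  have hq : ContDiffAt ℝ 2 (fun y => ‖y - X₀‖ ^ 2) X :=
    ((contDiff_norm_sq ℝ).comp (contDiff_id.sub contDiff_const)).contDiffAt
  rw [hu]
  refine ⟨ContDiffAt.comp (g := bubbleProfile _ _ _ _) X (contDiffAt_bubbleProfile hA ht) hq, ?_⟩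
  rw [sum_fderiv_fderiv_comp_sq_norm_sub
      ((lt_mem_nhds ht).mono fun t ht => hasDerivAt_bubbleProfile hA ht)
      (hasDerivAt_bubbleProfileDeriv hA ht),
    Fintype.card_fin, ← sq_rpow_div_two (norm_nonneg _) s]
  exact bubbleProfile_equation (by ring) (div_mul_cancel₀ _ (by linarith)) (by linarith)
    hK.ne' hA hC hC2 ht

/-- the standard bubble
`uhat(X) = (a^{(2-s)/2} k^{(2-s)/2} / (a^{2-s} + |X-X₀|^{2-s}))^{(n-2)/(2-s)}`
(with `k^{2-s} = (n-2)(n-s)K(n,s)`) is a classical solution of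
`Δuhat = K(n,s)^{-1} uhat^{2*(s)-1}/|X-X₀|^s` on `ℝⁿ \ {X₀}`, where `Δ = -∑ ∂²/∂xᵢ²`. -/
theorem stmt_2 (n : ℕ) (hn : 3 ≤ n) (s K a k : ℝ) (hs0 : 0 < s) (hs2 : s < 2)
    (hK : 0 < K) (ha : 0 < a) (hk : 0 < k)
    (hkdef : k ^ (2 - s) = ((n : ℝ) - 2) * ((n : ℝ) - s) * K)
    (X₀ : EuclideanSpace ℝ (Fin n)) :
    let twoStar : ℝ := 2 * ((n : ℝ) - s) / ((n : ℝ) - 2)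
    let uhat : EuclideanSpace ℝ (Fin n) → ℝ := fun X =>
      (a ^ ((2 - s) / 2) * k ^ ((2 - s) / 2) / (a ^ (2 - s) + ‖X - X₀‖ ^ (2 - s)))
        ^ (((n : ℝ) - 2) / (2 - s))
    ∀ X, X ≠ X₀ →
      ContDiffAt ℝ 2 uhat X ∧
      -(∑ i : Fin n, fderiv ℝ (fun y => fderiv ℝ uhat y (EuclideanSpace.single i 1)) X
          (EuclideanSpace.single i 1)) =
        K⁻¹ * uhat X ^ (twoStar - 1) / ‖X - X₀‖ ^ s :=
  stmt_2_general n hn s K a k hs2 hK ha hk hkdef X₀
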